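/- Let K ⊆ L be a finite separable commutative field extension, and let B be a K-subspace of L containing 1 such that ⟨B^{n−1}⟩ ≠ ⟨B^n⟩ for a given n ≥ 2 (i.e., the chain of powers strictly increases up to step n). If moreover the conclusion of the linearized Olson bound holds at each step (⟨B^{k+1}⟩ = ⟨B^k⟩ or dim⟨B^{k+1}⟩ ≥ dim⟨B^{k−1}⟩ + dim B), then the smallest n ≥ 1 with ⟨B^n⟩ a field satisfies n ≤ 2·dim_K L / dim_K B. -/

import Mathlib

/-!
If `⟨B^{k+1}⟩ = ⟨B^k⟩`, then `⟨B^k⟩ = ⟨B^{2k}⟩` is closed under multiplication, so it is a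
`K`-subalgebra of the algebraic extension `L`, hence a field. Minimality of `n` therefore forces
`⟨B^{k+1}⟩ ≠ ⟨B^k⟩` for `1 ≤ k < n`, and the step inequality then raises the dimension by
`dim B` every two steps: `m · dim B ≤ 2 dim ⟨B^m⟩` for `m ≤ n`. Take `m = n` and use
`dim ⟨B^n⟩ ≤ dim L`.
-/

theorem pow_add_eq_of_pow_succ_eq {M : Type*} [Monoid M] {a : M} {k : ℕ}
    (h : a ^ (k + 1) = a ^ k) : ∀ j : ℕ, a ^ (k + j) = a ^ k
  | 0 => rfl
  | j + 1 => by rw [← add_assoc, pow_succ, pow_add_eq_of_pow_succ_eq h j, ← pow_succ, h]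

theorem Submodule.mul_mem_of_pow_succ_eq {R A : Type*} [CommSemiring R] [Semiring A]
    [Algebra R A] {B : Submodule R A} {k : ℕ} (h : B ^ (k + 1) = B ^ k) :
    ∀ a ∈ B ^ k, ∀ b ∈ B ^ k, a * b ∈ B ^ k := by
  intro a ha b hb
  rw [← pow_add_eq_of_pow_succ_eq h k, pow_add]
  exact mul_mem_mul ha hb

theorem Submodule.inv_mem_of_mul_mem {K L : Type*} [Field K] [Field L] [Algebra K L]
    [Algebra.IsAlgebraic K L] {M : Submodule K L} (h1 : (1 : L) ∈ M)
    (hmul : ∀ a ∈ M, ∀ b ∈ M, a * b ∈ M) {a : L} (ha : a ∈ M) : a⁻¹ ∈ M :=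
  (M.toSubalgebra h1 fun _ _ ha hb => hmul _ ha _ hb).inv_mem_of_algebraic (x := ⟨a, ha⟩)
    (Algebra.IsAlgebraic.isAlgebraic a)

theorem mul_le_two_mul_of_two_step_growth {f : ℕ → ℕ} {d n : ℕ} (h1 : d ≤ f 1)
    (hstep : ∀ k, k + 2 ≤ n → f k + d ≤ f (k + 2)) : ∀ m ≤ n, m * d ≤ 2 * f m
  | 0, _ => by simp
  | 1, _ => by omega
  | k + 2, hk => by
    have := mul_le_two_mul_of_two_step_growth h1 hstep k (by omega)
    have := hstep k hk
    linarith

theorem stmt_18_general {K L : Type*} [Field K] [Field L] [Algebra K L]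
    [FiniteDimensional K L]
    (B : Submodule K L) (h1 : (1 : L) ∈ B)
    (hstep : ∀ k : ℕ, 1 ≤ k →
      B ^ (k + 1) = B ^ k ∨
        Module.finrank K ↥(B ^ (k - 1)) + Module.finrank K B ≤
          Module.finrank K ↥(B ^ (k + 1)))
    (n : ℕ)
    (hmin : ∀ m : ℕ, 1 ≤ m →
      ((∀ a ∈ B ^ m, ∀ b ∈ B ^ m, a * b ∈ B ^ m) ∧
        (∀ a ∈ B ^ m, a ≠ 0 → a⁻¹ ∈ B ^ m)) → n ≤ m) :
    n ≤ 2 * Module.finrank K L / Module.finrank K B := by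
  have hd : 0 < Module.finrank K B :=
    Module.finrank_pos_iff_exists_ne_zero.mpr ⟨⟨1, h1⟩, by simp⟩
  have hgrow : ∀ k, k + 2 ≤ n →
      Module.finrank K ↥(B ^ k) + Module.finrank K B ≤ Module.finrank K ↥(B ^ (k + 2)) := by
    intro k hk
    refine (hstep (k + 1) (by omega)).resolve_left fun hstable => ?_
    have hone : (1 : L) ∈ B ^ (k + 1) :=
      Submodule.one_le.mp (Left.one_le_pow_of_le (Submodule.one_le.mpr h1) _)
    have hmul := Submodule.mul_mem_of_pow_succ_eq hstable
    have := hmin (k + 1) (by omega)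
      ⟨hmul, fun a ha _ => Submodule.inv_mem_of_mul_mem hone hmul ha⟩
    omega
  rw [Nat.le_div_iff_mul_le hd]
  calc n * Module.finrank K B ≤ 2 * Module.finrank K ↥(B ^ n) :=
        mul_le_two_mul_of_two_step_growth (by rw [pow_one]) hgrow n le_rfl
    _ ≤ 2 * Module.finrank K L := by gcongr; exact Submodule.finrank_le _

/-- The smallest `n ≥ 1` such that `⟨Bⁿ⟩` is a subfield of `L` satisfies
`n ≤ 2 dim_K L / dim_K B`, for a finite separable extension `K ⊆ L`
and a subspace `B` containing `1`, assuming the linearized Olson step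
inequality at each step. -/
theorem stmt_18 {K L : Type*} [Field K] [Field L] [Algebra K L]
    [FiniteDimensional K L] [Algebra.IsSeparable K L]
    (B : Submodule K L) (h1 : (1 : L) ∈ B)
    (hstep : ∀ k : ℕ, 1 ≤ k →
      B ^ (k + 1) = B ^ k ∨
        Module.finrank K ↥(B ^ (k - 1)) + Module.finrank K B ≤
          Module.finrank K ↥(B ^ (k + 1)))
    (n : ℕ) (hn : 1 ≤ n)
    (hfield : (∀ a ∈ B ^ n, ∀ b ∈ B ^ n, a * b ∈ B ^ n) ∧
      (∀ a ∈ B ^ n, a ≠ 0 → a⁻¹ ∈ B ^ n))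
    (hmin : ∀ m : ℕ, 1 ≤ m →
      ((∀ a ∈ B ^ m, ∀ b ∈ B ^ m, a * b ∈ B ^ m) ∧
        (∀ a ∈ B ^ m, a ≠ 0 → a⁻¹ ∈ B ^ m)) → n ≤ m) :
    n ≤ 2 * Module.finrank K L / Module.finrank K B :=
  stmt_18_general B h1 hstep n hmin
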